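/- Let α, β, γ, δ ∈ ℝ with α + δ ≠ 0 and αγ − βδ = 0. Then (𝔤₆, g, J) is a first kind algebraic Wanas soliton associated to the canonical connection ∇⁰ if and only if one of the following holds: (i) α ≠ 0, β = γ = δ = 0, α² + c = 0, with De₁ = 0, De₂ = 0, De₃ = α²e₃; (ii) β = γ = 0, δ ≠ 0, α² + δ² + c = 0, with De₁ = 0, De₂ = δ²e₂, De₃ = (α²+δ²)e₃; (iii) β ≠ 0, δ ≠ 0, γ = −β, δ = −α, α² = β², α² + c = 0, with De₁ = 0, De₂ = −β²e₂ − αβe₃, De₃ = αβe₂ + α²e₃. -/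
import Mathlib


noncomputable section

/-- The underlying vector space `ℝ³`. -/
abbrev V : Type := Fin 3 → ℝ

/-- The basis vector `e₁`. -/
def e1 : V := ![1, 0, 0]

/-- The basis vector `e₂`. -/
def e2 : V := ![0, 1, 0]

/-- The basis vector `e₃`. -/
def e3 : V := ![0, 0, 1]

/-- The Lorentzian metric `g` with `g(e₁,e₁) = g(e₂,e₂) = 1`, `g(e₃,e₃) = -1`. -/
def g (x y : V) : ℝ := x 0 * y 0 + x 1 * y 1 - x 2 * y 2

/-- The Lie bracket. -/
def br (α β γ δ : ℝ) (x y : V) : V :=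
  (x 0 * y 1 - x 1 * y 0) • (α • e2 + β • e3) + (x 0 * y 2 - x 2 * y 0) • (γ • e2 + δ • e3)

/-- The canonical connection `∇⁰`. -/
def nab (α β γ δ : ℝ) (x y : V) : V :=
  (x 1 * y 0) • (-(α • e2)) + (x 1 * y 1) • (α • e1) + (x 2 * y 0) • (((β - γ) / 2) • e2) +
    (x 2 * y 1) • (-(((β - γ) / 2) • e1))

/-- The torsion `T⁰(X,Y) = ∇⁰_X Y - ∇⁰_Y X - [X,Y]`. -/
def T (α β γ δ : ℝ) (x y : V) : V := nab α β γ δ x y - nab α β γ δ y x - br α β γ δ x y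

/-- The tensor `A⁰(X,Y)Z = T⁰(T⁰(X,Y),Z)`. -/
def A (α β γ δ : ℝ) (x y z : V) : V := T α β γ δ (T α β γ δ x y) z

/-- The curvature `R⁰(X,Y)Z = ∇⁰_X ∇⁰_Y Z - ∇⁰_Y ∇⁰_X Z - ∇⁰_{[X,Y]} Z`. -/
def Rc (α β γ δ : ℝ) (x y z : V) : V :=
  nab α β γ δ x (nab α β γ δ y z) - nab α β γ δ y (nab α β γ δ x z) - nab α β γ δ (br α β γ δ x y) z

/-- The Wanas tensor `W⁰(X,Y)Z = R⁰(X,Y)Z - A⁰(X,Y)Z`. -/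
def W (α β γ δ : ℝ) (x y z : V) : V := Rc α β γ δ x y z - A α β γ δ x y z

/-- `w⁰(X,Y) = -g(W⁰(X,e₁)Y,e₁) - g(W⁰(X,e₂)Y,e₂) + g(W⁰(X,e₃)Y,e₃)`. -/
def w (α β γ δ : ℝ) (x y : V) : ℝ :=
  -g (W α β γ δ x e1 y) e1 - g (W α β γ δ x e2 y) e2 + g (W α β γ δ x e3 y) e3

/-- `w̃⁰(X,Y) = (w⁰(X,Y) + w⁰(Y,X))/2`. -/
def wt (α β γ δ : ℝ) (x y : V) : ℝ := (w α β γ δ x y + w α β γ δ y x) / 2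

/-- `D` is a derivation of the Lie algebra. -/
def IsDeriv (α β γ δ : ℝ) (D : V →ₗ[ℝ] V) : Prop :=
  ∀ x y, D (br α β γ δ x y) = br α β γ δ (D x) y + br α β γ δ x (D y)

lemma g_e1 (y : V) : g y e1 = y 0 := by simp [g, e1]
lemma g_e2 (y : V) : g y e2 = y 1 := by simp [g, e2]
lemma g_e3 (y : V) : g y e3 = -y 2 := by simp [g, e3]

lemma basis_expand (x : V) : x = x 0 • e1 + x 1 • e2 + x 2 • e3 := by
  funext i; fin_cases i <;> simp [e1, e2, e3]

set_option maxHeartbeats 2000000 in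
lemma WanCols (α β γ δ : ℝ) (Wan : V →ₗ[ℝ] V)
    (hWan : ∀ x y, w α β γ δ x y = g (Wan x) y) :
    Wan e1 = ![-α^2-δ^2-3/2*(β*γ)-1/2*β^2, 0, 0] ∧
    Wan e2 = ![0, 1/2*(β*γ)-1/2*β^2-α^2, 1/2*(β*δ)-1/2*(γ*δ)] ∧
    Wan e3 = ![0, -(α*γ), (γ^2-β^2)/2] := by
  have a1 : Wan e1 0 = -α^2-δ^2-3/2*(β*γ)-1/2*β^2 := by
    have h0 := hWan e1 e1; rw [g_e1] at h0
    have h' : w α β γ δ e1 e1 = -α^2-δ^2-3/2*(β*γ)-1/2*β^2 := by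
      simp [w, W, Rc, A, T, nab, br, g, e1, e2, e3]; ring
    linarith [h0, h']
  have a2 : Wan e1 1 = 0 := by
    have h0 := hWan e1 e2; rw [g_e2] at h0
    have h' : w α β γ δ e1 e2 = 0 := by
      simp [w, W, Rc, A, T, nab, br, g, e1, e2, e3]
    linarith [h0, h']
  have a3 : Wan e1 2 = 0 := by
    have h0 := hWan e1 e3; rw [g_e3] at h0
    have h' : w α β γ δ e1 e3 = 0 := by
      simp [w, W, Rc, A, T, nab, br, g, e1, e2, e3]
    linarith [h0, h']
  have b1 : Wan e2 0 = 0 := by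
    have h0 := hWan e2 e1; rw [g_e1] at h0
    have h' : w α β γ δ e2 e1 = 0 := by
      simp [w, W, Rc, A, T, nab, br, g, e1, e2, e3]
    linarith [h0, h']
  have b2 : Wan e2 1 = 1/2*(β*γ)-1/2*β^2-α^2 := by
    have h0 := hWan e2 e2; rw [g_e2] at h0
    have h' : w α β γ δ e2 e2 = 1/2*(β*γ)-1/2*β^2-α^2 := by
      simp [w, W, Rc, A, T, nab, br, g, e1, e2, e3]; ring
    linarith [h0, h']
  have b3 : Wan e2 2 = 1/2*(β*δ)-1/2*(γ*δ) := by
    have h0 := hWan e2 e3; rw [g_e3] at h0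
    have h' : w α β γ δ e2 e3 = 1/2*(γ*δ)-1/2*(β*δ) := by
      simp [w, W, Rc, A, T, nab, br, g, e1, e2, e3]; ring
    linarith [h0, h']
  have c1 : Wan e3 0 = 0 := by
    have h0 := hWan e3 e1; rw [g_e1] at h0
    have h' : w α β γ δ e3 e1 = 0 := by
      simp [w, W, Rc, A, T, nab, br, g, e1, e2, e3]
    linarith [h0, h']
  have c2 : Wan e3 1 = -(α*γ) := by
    have h0 := hWan e3 e2; rw [g_e2] at h0
    have h' : w α β γ δ e3 e2 = -(α*γ) := by
      simp [w, W, Rc, A, T, nab, br, g, e1, e2, e3]; ring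
    linarith [h0, h']
  have c3 : Wan e3 2 = (γ^2-β^2)/2 := by
    have h0 := hWan e3 e3; rw [g_e3] at h0
    have h' : w α β γ δ e3 e3 = (β^2-γ^2)/2 := by
      simp [w, W, Rc, A, T, nab, br, g, e1, e2, e3]; ring
    linarith [h0, h']
  refine ⟨?_, ?_, ?_⟩ <;> funext i <;> fin_cases i
  · exact a1
  · exact a2
  · exact a3
  · exact b1
  · exact b2
  · exact b3
  · exact c1
  · exact c2
  · exact c3

lemma solveAlg (α β γ δ c : ℝ) (h1 : α + δ ≠ 0) (h2 : α*γ - β*δ = 0)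
    (E1 : γ^2*δ/2 - β*γ*δ/2 + α*c + α*δ^2 + α*β*γ/2 + α*β^2/2 + α^3 = 0)
    (E2 : γ*δ^2/2 + β*c + β*δ^2/2 + β*γ^2/2 + β^2*γ + β^3/2 - α*γ*δ/2 + α*β*δ/2 + 2*α^2*β = 0)
    (E3 : γ*c + γ*δ^2 - γ^3/2 + 2*β*γ^2 + β^2*γ/2 - α*γ*δ + α^2*γ = 0)
    (E4 : δ*c + δ^3 - γ^2*δ/2 + 2*β*γ*δ + β^2*δ/2 + α*β*γ + α^2*δ = 0) :
    (α ≠ 0 ∧ β = 0 ∧ γ = 0 ∧ δ = 0 ∧ c = -α^2) ∨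
      (β = 0 ∧ γ = 0 ∧ δ ≠ 0 ∧ c = -α^2 - δ^2) := by
  by_cases hδ : δ = 0
  · subst hδ
    have hα : α ≠ 0 := by simpa using h1
    have hγ : γ = 0 := by
      have hag : α * γ = 0 := by linear_combination h2
      exact (mul_eq_zero.mp hag).resolve_left hα
    subst hγ
    have hc' : c = -α^2 - β^2/2 := by
      have h5 : α * (c + β^2/2 + α^2) = 0 := by linear_combination E1
      have := (mul_eq_zero.mp h5).resolve_left hα
      linarith
    have hβ : β = 0 := by
      have h5 : β * α^2 = 0 := by linear_combination E2 - β*hc'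
      rcases mul_eq_zero.mp h5 with h | h
      · exact h
      · exact absurd (pow_eq_zero_iff (n := 2) (by norm_num) |>.mp h) hα
    subst hβ
    exact Or.inl ⟨hα, rfl, rfl, rfl, by linarith⟩
  · by_cases hγ : γ = 0
    · subst hγ
      have hβ : β = 0 := by
        have hbd : β * δ = 0 := by linear_combination -h2
        exact (mul_eq_zero.mp hbd).resolve_right hδ
      subst hβ
      have hc' : c = -α^2 - δ^2 := by
        have h5 : δ * (c + δ^2 + α^2) = 0 := by linear_combination E4
        have := (mul_eq_zero.mp h5).resolve_left hδ
        linarith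
      exact Or.inr ⟨rfl, rfl, hδ, hc'⟩
    · exfalso
      have hX : c + α^2 + δ^2 - γ^2/2 + 2*β*γ + 3*β^2/2 = 0 := by
        have h5 : δ * (c + α^2 + δ^2 - γ^2/2 + 2*β*γ + 3*β^2/2) = 0 := by
          linear_combination E4 - β*h2
        exact (mul_eq_zero.mp h5).resolve_left hδ
      have h5 : β * (β*γ + δ^2) = 0 := by linear_combination γ*hX - E3 - δ*h2
      by_cases hβ0 : β = 0
      · subst hβ0
        have hA : α = 0 := by
          have hag : α * γ = 0 := by linear_combination h2
          exact (mul_eq_zero.mp hag).resolve_right hγ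
        subst hA
        have : γ^2 * δ = 0 := by linear_combination 2*E1
        rcases mul_eq_zero.mp this with h | h
        · exact hγ (pow_eq_zero_iff (n := 2) (by norm_num) |>.mp h)
        · exact hδ h
      · have hbg : β*γ + δ^2 = 0 := (mul_eq_zero.mp h5).resolve_left hβ0
        have r7 : α*δ + β^2 = 0 := by
          have h6 : δ * (α*δ + β^2) = 0 := by linear_combination α*hbg - β*h2
          exact (mul_eq_zero.mp h6).resolve_left hδ
        have r1 : δ^2*γ^2 - 3*β^2*δ^2 - 2*α*β^2*δ = 0 := by
          linear_combination (2*δ)*E1 - (2*α)*E4 - (γ*δ - 3*β*δ - 2*α*β)*h2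
        have key : δ^3 * ((δ+α)^2*(δ-2*α)) = 0 := by
          linear_combination β^2*r1 - δ^2*(β*γ-δ^2)*hbg + (3*δ^2+2*α*δ)*(β^2-α*δ)*r7
        have key2 : (δ+α)^2*(δ-2*α) = 0 :=
          (mul_eq_zero.mp key).resolve_left (pow_ne_zero _ hδ)
        rcases mul_eq_zero.mp key2 with h | h
        · have : δ + α = 0 := pow_eq_zero_iff (n := 2) (by norm_num) |>.mp h
          exact h1 (by linarith)
        · have hδ2 : δ = 2*α := by linarith
          have hb2 : β^2 > 0 := by positivity
          nlinarith [sq_nonneg α]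

lemma back (α δ c : ℝ) (Wan D : V →ₗ[ℝ] V)
    (hWan : ∀ x y, w α 0 0 δ x y = g (Wan x) y)
    (hc : c = -α^2 - δ^2)
    (hd1 : D e1 = 0) (hd2 : D e2 = δ^2 • e2) (hd3 : D e3 = (α^2+δ^2) • e3) :
    IsDeriv α 0 0 δ D ∧ ∀ x, Wan x = c • x + D x := by
  obtain ⟨w1, w2, w3⟩ := WanCols α 0 0 δ Wan hWan
  have hx : ∀ z : V, D z = ![0, z 1 * δ^2, z 2 * (α^2+δ^2)] := by
    intro z
    have h := congrArg D (basis_expand z)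
    rw [map_add, map_add, map_smul, map_smul, map_smul, hd1, hd2, hd3] at h
    rw [h]; funext i; fin_cases i <;> simp [e2, e3] <;> ring
  constructor
  · intro x y
    rw [hx (br α 0 0 δ x y), hx x, hx y]
    funext i; fin_cases i <;> simp [br, e1, e2, e3] <;> ring
  · intro x
    have hWx : Wan x = x 0 • Wan e1 + x 1 • Wan e2 + x 2 • Wan e3 := by
      conv_lhs => rw [basis_expand x]
      rw [map_add, map_add, map_smul, map_smul, map_smul]
    rw [hWx, w1, w2, w3, hx x, hc]
    funext i; fin_cases i <;> simp [e1, e2, e3] <;> ring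
set_option maxHeartbeats 4000000 in
theorem g6_first_kind_algebraic_Wanas_soliton (α β γ δ : ℝ)
    (h1 : α + δ ≠ 0) (h2 : α * γ - β * δ = 0)
    (Wan : V →ₗ[ℝ] V) (hWan : ∀ x y, w α β γ δ x y = g (Wan x) y)
    (c : ℝ) (D : V →ₗ[ℝ] V) :
    (IsDeriv α β γ δ D ∧ ∀ x, Wan x = c • x + D x) ↔
      (α ≠ 0 ∧ β = 0 ∧ γ = 0 ∧ δ = 0 ∧ α ^ 2 + c = 0 ∧
        D e1 = 0 ∧ D e2 = 0 ∧ D e3 = α ^ 2 • e3) ∨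
      (β = 0 ∧ γ = 0 ∧ δ ≠ 0 ∧ α ^ 2 + δ ^ 2 + c = 0 ∧
        D e1 = 0 ∧ D e2 = δ ^ 2 • e2 ∧ D e3 = (α ^ 2 + δ ^ 2) • e3) ∨
      (β ≠ 0 ∧ δ ≠ 0 ∧ γ = -β ∧ δ = -α ∧ α ^ 2 = β ^ 2 ∧ α ^ 2 + c = 0 ∧
        D e1 = 0 ∧ D e2 = -(β ^ 2 • e2) - (α * β) • e3 ∧
        D e3 = (α * β) • e2 + α ^ 2 • e3) := by
  constructor
  · rintro ⟨hDer, hEq⟩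
    obtain ⟨w1, w2, w3⟩ := WanCols α β γ δ Wan hWan
    have hd : ∀ u, D u = Wan u - c • u := by
      intro u; rw [hEq u]; abel
    have hD1 : D e1 = ![-α^2-δ^2-3/2*(β*γ)-1/2*β^2, 0, 0] - c • e1 := by rw [hd, w1]
    have hD2 : D e2 = ![0, 1/2*(β*γ)-1/2*β^2-α^2, 1/2*(β*δ)-1/2*(γ*δ)] - c • e2 := by
      rw [hd, w2]
    have hD3 : D e3 = ![0, -(α*γ), (γ^2-β^2)/2] - c • e3 := by rw [hd, w3]
    have hbr12 : br α β γ δ e1 e2 = α • e2 + β • e3 := by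
      funext i; fin_cases i <;> simp [br, e1, e2, e3]
    have hbr13 : br α β γ δ e1 e3 = γ • e2 + δ • e3 := by
      funext i; fin_cases i <;> simp [br, e1, e2, e3]
    have h12 := hDer e1 e2
    rw [hbr12, map_add, map_smul, map_smul, hD1, hD2, hD3] at h12
    have h13 := hDer e1 e3
    rw [hbr13, map_add, map_smul, map_smul, hD1, hD2, hD3] at h13
    have t1 := congrFun h12 1
    have t2 := congrFun h12 2
    have t3 := congrFun h13 1
    have t4 := congrFun h13 2
    simp [br, e1, e2, e3] at t1 t2 t3 t4
    have E1 : γ^2*δ/2 - β*γ*δ/2 + α*c + α*δ^2 + α*β*γ/2 + α*β^2/2 + α^3 = 0 := by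
      linear_combination t1
    have E2 : γ*δ^2/2 + β*c + β*δ^2/2 + β*γ^2/2 + β^2*γ + β^3/2 - α*γ*δ/2 + α*β*δ/2
        + 2*α^2*β = 0 := by linear_combination t2
    have E3 : γ*c + γ*δ^2 - γ^3/2 + 2*β*γ^2 + β^2*γ/2 - α*γ*δ + α^2*γ = 0 := by
      linear_combination t3
    have E4 : δ*c + δ^3 - γ^2*δ/2 + 2*β*γ*δ + β^2*δ/2 + α*β*γ + α^2*δ = 0 := by
      linear_combination t4
    rcases solveAlg α β γ δ c h1 h2 E1 E2 E3 E4 with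
      ⟨hα, hβ, hγ, hδ, hc⟩ | ⟨hβ, hγ, hδ, hc⟩
    · subst hβ; subst hγ; subst hδ
      refine Or.inl ⟨hα, rfl, rfl, rfl, by linarith, ?_, ?_, ?_⟩
      · rw [hD1]; funext i; fin_cases i <;> simp [e1] <;> linarith
      · rw [hD2]; funext i; fin_cases i <;> simp [e2] <;> linarith
      · rw [hD3]; funext i; fin_cases i <;> simp [e3] <;> linarith
    · subst hβ; subst hγ
      refine Or.inr (Or.inl ⟨rfl, rfl, hδ, by linarith, ?_, ?_, ?_⟩)
      · rw [hD1]; funext i; fin_cases i <;> simp [e1] <;> linarith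
      · rw [hD2]; funext i; fin_cases i <;> simp [e2] <;> linarith
      · rw [hD3]; funext i; fin_cases i <;> simp [e3] <;> linarith
  · rintro (⟨hα, hβ, hγ, hδ, hc, hd1, hd2, hd3⟩ | ⟨hβ, hγ, hδ, hc, hd1, hd2, hd3⟩ |
      ⟨hβ, hδ, hγ, hδα, hab, hc, hd1, hd2, hd3⟩)
    · subst hβ; subst hγ; subst hδ
      exact back α 0 c Wan D hWan (by norm_num; linarith) hd1 (by simp [hd2])
        (by rw [hd3]; norm_num)
    · subst hβ; subst hγ
      exact back α δ c Wan D hWan (by linarith) hd1 hd2 hd3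
    · exact absurd (by rw [hδα]; ring : α + δ = 0) h1
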